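/- The exponential generating function for the number of assembly trees of complete multipartite graphs $K_{(n_1,\dots,n_N)}$ is $A(\mathbf{x}) = 1 - \sqrt{1 - N + \sum_{i=1}^N (1-x_i)^2}$; in particular for complete bipartite graphs $K_{n_1,n_2}$ it is $A(x,y) = 1 - \sqrt{(1-x)^2 + (1-y)^2 - 1}$. -/

import Mathlib

/-- The family of labels of an assembly tree (edge gluing rule) for a graph `G`:
all singletons, the full vertex set, laminar, with each non-singleton member
split into two disjoint members joined by an edge of `G`; the cardinality
`2|V| - 1` forces the family to be exactly the node labels of a rooted binary
tree with `|V|` leaves. Two assembly trees are equal iff there is a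
label-preserving isomorphism, iff they have the same label family. -/
def IsAssemblyFamily {V : Type*} [Fintype V] [DecidableEq V]
    (G : SimpleGraph V) (F : Finset (Finset V)) : Prop :=
  (∀ v : V, {v} ∈ F) ∧
  (Finset.univ ∈ F) ∧
  (∀ U ∈ F, U.Nonempty) ∧
  (∀ U₁ ∈ F, ∀ U₂ ∈ F, U₁ ⊆ U₂ ∨ U₂ ⊆ U₁ ∨ Disjoint U₁ U₂) ∧
  (∀ U ∈ F, 2 ≤ U.card → ∃ U₁ ∈ F, ∃ U₂ ∈ F, Disjoint U₁ U₂ ∧ U₁ ∪ U₂ = U ∧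
      ∃ v₁ ∈ U₁, ∃ v₂ ∈ U₂, G.Adj v₁ v₂) ∧
  F.card = 2 * Fintype.card V - 1

/-- The number of assembly trees of `G` using the edge gluing rule. -/
noncomputable def assemblyTreeCount {V : Type*} [Fintype V] [DecidableEq V]
    (G : SimpleGraph V) : ℕ :=
  Nat.card {F : Finset (Finset V) // IsAssemblyFamily G F}

/-- The complete multipartite graph with parts of sizes `n 0, …, n (N-1)`. -/
def completeMultipartiteGraph' {N : ℕ} (n : Fin N → ℕ) :
    SimpleGraph (Σ i : Fin N, Fin (n i)) :=
  SimpleGraph.fromRel (fun u v => u.1 ≠ v.1)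

/-!
Let `a(G)` count assembly trees. For a graph `G` on at least two vertices, cutting an assembly
tree at its root gives a part `S`, its complement, and assembly trees on `S` and on `Sᶜ`; when
`G` is connected every such triple glues back to a tree, and each tree arises from exactly two
triples (the root's two children in either order). Hence `2 a(G) = ∑_S a(G[S]) a(G[Sᶜ])`.
For `G = K_n` the induced graph `G[S]` is `K_m` with `m` the part sizes of `S`, and there are
`∏ C(nᵢ, mᵢ)` such `S`, so the coefficient of `xⁿ` in `A²` is twice that of `A` whenever `n`
has two nonzero parts. Within a single part `K_n` has no edges, so there `a = 1` for one vertex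
and `0` otherwise. Together: `A² = 2A + ∑ (xᵢ² - 2xᵢ)`, i.e. `(1 - A)² = 1 - N + ∑ (1 - xᵢ)²`.
-/

open Finset

section AssemblyFamilies

variable {V W : Type*}

def IsLaminar (F : Finset (Finset V)) : Prop :=
  ∀ U₁ ∈ F, ∀ U₂ ∈ F, U₁ ⊆ U₂ ∨ U₂ ⊆ U₁ ∨ Disjoint U₁ U₂

theorem IsLaminar.mono {F F' : Finset (Finset V)} (hF : IsLaminar F) (h : F' ⊆ F) :
    IsLaminar F' :=
  fun U₁ h₁ U₂ h₂ => hF U₁ (h h₁) U₂ (h h₂)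

theorem IsLaminar.union [DecidableEq V] {F₁ F₂ : Finset (Finset V)} (h₁ : IsLaminar F₁)
    (h₂ : IsLaminar F₂) (h : ∀ U₁ ∈ F₁, ∀ U₂ ∈ F₂, Disjoint U₁ U₂) : IsLaminar (F₁ ∪ F₂) := by
  intro U₁ hU₁ U₂ hU₂
  rcases mem_union.mp hU₁ with hU₁ | hU₁ <;> rcases mem_union.mp hU₂ with hU₂ | hU₂
  exacts [h₁ U₁ hU₁ U₂ hU₂, .inr (.inr (h U₁ hU₁ U₂ hU₂)), .inr (.inr (h U₂ hU₂ U₁ hU₁).symm),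
    h₂ U₁ hU₁ U₂ hU₂]

theorem IsLaminar.insert_univ [Fintype V] [DecidableEq V] {F : Finset (Finset V)}
    (h : IsLaminar F) : IsLaminar (insert univ F) := by
  intro U₁ hU₁ U₂ hU₂
  rcases mem_insert.mp hU₁ with rfl | hU₁
  · exact .inr (.inl (subset_univ U₂))
  rcases mem_insert.mp hU₂ with rfl | hU₂
  · exact .inl (subset_univ U₁)
  exact h U₁ hU₁ U₂ hU₂

theorem IsLaminar.exists_ssubset_forall [DecidableEq V] {T : Finset V} {F : Finset (Finset V)} (hF : IsLaminar F)
    (hsub : ∀ U ∈ F, U ⊆ T) {U₀ : Finset V} (hU₀ : U₀ ∈ F) (hU₀T : U₀ ≠ T) :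
    ∃ M ∈ F, M ⊂ T ∧ ∀ U ∈ F, U ⊆ M ∨ Disjoint U M ∨ U = T := by
  obtain ⟨M, hM, hMmax⟩ := (F.filter (· ≠ T)).exists_max_image card ⟨U₀, mem_filter.mpr ⟨hU₀, hU₀T⟩⟩
  obtain ⟨hMF, hMT⟩ := mem_filter.mp hM
  refine ⟨M, hMF, (hsub M hMF).ssubset_of_ne hMT, fun U hU => ?_⟩
  by_cases hUT : U = T
  · exact .inr (.inr hUT)
  rcases hF U hU M hMF with h | h | h
  · exact .inl h
  · exact .inl (eq_of_subset_of_card_le h (hMmax U (mem_filter.mpr ⟨hU, hUT⟩))).ge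
  · exact .inr (.inl h)

theorem IsLaminar.card_le [DecidableEq V] {T : Finset V} {F : Finset (Finset V)} (hF : IsLaminar F)
    (hne : ∀ U ∈ F, U.Nonempty) (hsub : ∀ U ∈ F, U ⊆ T) : #F ≤ 2 * #T - 1 := by
  induction T using Finset.strongInduction generalizing F with
  | _ T ih =>
  by_cases hT : ∀ U ∈ F, U = T
  · rcases F.eq_empty_or_nonempty with rfl | ⟨U, hU⟩
    · simp
    have := card_le_one.mpr fun U hU U' hU' => (hT U hU).trans (hT U' hU').symm
    have := ((hne U hU).mono (hsub U hU)).card_pos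
    omega
  push Not at hT
  obtain ⟨U₀, hU₀, hU₀T⟩ := hT
  obtain ⟨M, hMF, hMT, hsplit⟩ := hF.exists_ssubset_forall hsub hU₀ hU₀T
  have hcover : F ⊆ F.filter (· ⊆ M) ∪ F.filter (Disjoint · M) ∪ {T} := by
    intro U hU
    rcases hsplit U hU with h | h | h <;> simp [hU, h]
  have h₁ := ih M hMT (hF.mono (filter_subset _ _)) (fun U hU => hne U (mem_filter.mp hU).1)
    (fun U hU => (mem_filter.mp hU).2)
  have h₂ := ih (T \ M) (sdiff_ssubset hMT.subset (hne M hMF)) (hF.mono (filter_subset _ _))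
    (fun U hU => hne U (mem_filter.mp hU).1)
    (fun U hU => subset_sdiff.mpr ⟨hsub U (mem_filter.mp hU).1, (mem_filter.mp hU).2⟩)
  have := card_le_card hcover
  have := card_union_le (F.filter (· ⊆ M) ∪ F.filter (Disjoint · M)) {T}
  have := card_union_le (F.filter (· ⊆ M)) (F.filter (Disjoint · M))
  have := card_sdiff_of_subset hMT.subset
  have := card_lt_card hMT
  have := (hne M hMF).card_pos
  simp only [card_singleton] at *
  omega

variable [DecidableEq V] [DecidableEq W]

structure IsAssemblyFamilyOn (G : SimpleGraph V) (T : Finset V) (F : Finset (Finset V)) :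
    Prop where
  singleton_mem : ∀ v ∈ T, {v} ∈ F
  mem : T ∈ F
  nonempty : ∀ U ∈ F, U.Nonempty
  subset : ∀ U ∈ F, U ⊆ T
  isLaminar : IsLaminar F
  exists_split : ∀ U ∈ F, 2 ≤ #U → ∃ U₁ ∈ F, ∃ U₂ ∈ F, Disjoint U₁ U₂ ∧ U₁ ∪ U₂ = U ∧
    ∃ v₁ ∈ U₁, ∃ v₂ ∈ U₂, G.Adj v₁ v₂
  card : #F = 2 * #T - 1

theorem isAssemblyFamilyOn_iff {G : SimpleGraph V} {T : Finset V} {F : Finset (Finset V)} :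
    IsAssemblyFamilyOn G T F ↔ (∀ v ∈ T, {v} ∈ F) ∧ T ∈ F ∧ (∀ U ∈ F, U.Nonempty) ∧
      (∀ U ∈ F, U ⊆ T) ∧ IsLaminar F ∧
      (∀ U ∈ F, 2 ≤ #U → ∃ U₁ ∈ F, ∃ U₂ ∈ F, Disjoint U₁ U₂ ∧ U₁ ∪ U₂ = U ∧
        ∃ v₁ ∈ U₁, ∃ v₂ ∈ U₂, G.Adj v₁ v₂) ∧ #F = 2 * #T - 1 :=
  ⟨fun ⟨h₁, h₂, h₃, h₄, h₅, h₆, h₇⟩ => ⟨h₁, h₂, h₃, h₄, h₅, h₆, h₇⟩,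
    fun ⟨h₁, h₂, h₃, h₄, h₅, h₆, h₇⟩ => ⟨h₁, h₂, h₃, h₄, h₅, h₆, h₇⟩⟩

open Classical in
noncomputable def assemblyFamiliesOn [Fintype V] (G : SimpleGraph V) (T : Finset V) :
    Finset (Finset (Finset V)) :=
  univ.filter (IsAssemblyFamilyOn G T)

@[simp]
theorem mem_assemblyFamiliesOn [Fintype V] {G : SimpleGraph V} {T : Finset V}
    {F : Finset (Finset V)} : F ∈ assemblyFamiliesOn G T ↔ IsAssemblyFamilyOn G T F := by
  simp [assemblyFamiliesOn]

theorem assemblyTreeCount_eq_card [Fintype V] (G : SimpleGraph V) :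
    assemblyTreeCount G = #(assemblyFamiliesOn G univ) := by
  rw [assemblyTreeCount, ← Nat.card_eq_finsetCard]
  simp [isAssemblyFamilyOn_iff, IsAssemblyFamily, IsLaminar]

theorem isAssemblyFamilyOn_map_iff {G : SimpleGraph V} {H : SimpleGraph W} (ψ : H ↪g G)
    {T : Finset W} {F : Finset (Finset W)} :
    IsAssemblyFamilyOn G (T.map ψ.toEmbedding) (F.map (mapEmbedding ψ.toEmbedding).toEmbedding) ↔
      IsAssemblyFamilyOn H T F := by
  have map_eq_singleton (U : Finset W) (w : W) : U.map ψ.toEmbedding = {ψ w} ↔ U = {w} := by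
    rw [show ({ψ w} : Finset V) = ({w} : Finset W).map ψ.toEmbedding by simp, map_inj]
  simp [isAssemblyFamilyOn_iff, IsLaminar, ← map_union, map_eq_singleton]

theorem assemblyFamiliesOn_map [Fintype V] [Fintype W] {G : SimpleGraph V} {H : SimpleGraph W}
    (ψ : H ↪g G) (T : Finset W) :
    assemblyFamiliesOn G (T.map ψ.toEmbedding) =
      (assemblyFamiliesOn H T).map
        (mapEmbedding (mapEmbedding ψ.toEmbedding).toEmbedding).toEmbedding := by
  ext F'
  simp only [mem_map, mem_assemblyFamiliesOn]
  constructor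
  · intro hF'
    obtain ⟨F, -, rfl⟩ :
        ∃ F ⊆ T.powerset, F' = F.map (mapEmbedding ψ.toEmbedding).toEmbedding := by
      refine subset_map_iff.mp fun U hU => ?_
      obtain ⟨U', hU', rfl⟩ := subset_map_iff.mp (hF'.subset U hU)
      exact mem_map_of_mem _ (mem_powerset.mpr hU')
    exact ⟨F, (isAssemblyFamilyOn_map_iff ψ).mp hF', rfl⟩
  · rintro ⟨F, hF, rfl⟩
    exact (isAssemblyFamilyOn_map_iff ψ).mpr hF

theorem assemblyTreeCount_of_isEmpty [Fintype V] [IsEmpty V] (G : SimpleGraph V) :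
    assemblyTreeCount G = 0 := by
  rw [assemblyTreeCount_eq_card, card_eq_zero, eq_empty_iff_forall_notMem]
  intro F hF
  obtain ⟨v, -⟩ := (mem_assemblyFamiliesOn.mp hF).nonempty univ (mem_assemblyFamiliesOn.mp hF).mem
  exact IsEmpty.false v

theorem assemblyTreeCount_bot [Fintype V] (hV : 1 < Fintype.card V) :
    assemblyTreeCount (⊥ : SimpleGraph V) = 0 := by
  rw [assemblyTreeCount_eq_card, card_eq_zero, eq_empty_iff_forall_notMem]
  intro F hF
  have hF := mem_assemblyFamiliesOn.mp hF
  obtain ⟨_, -, _, -, -, -, _, -, _, -, hadj⟩ := hF.exists_split univ hF.mem (by rwa [card_univ])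
  exact hadj

theorem assemblyTreeCount_of_card_eq_one [Fintype V] (G : SimpleGraph V)
    (hV : Fintype.card V = 1) : assemblyTreeCount G = 1 := by
  have huniv (U : Finset V) (hU : U.Nonempty) : U = univ :=
    eq_univ_of_card U (le_antisymm (card_le_univ U) (hV ▸ hU.card_pos))
  have hsingleton : IsAssemblyFamilyOn G univ {univ} := by
    refine ⟨fun v _ => ?_, mem_singleton_self _, fun U hU => ?_, fun U _ => subset_univ U,
      fun U₁ h₁ U₂ h₂ => ?_, fun U hU hU2 => ?_, by simp [hV]⟩
    all_goals simp only [mem_singleton] at *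
    · exact huniv _ (singleton_nonempty v)
    · exact hU ▸ univ_nonempty_iff.mpr (Fintype.card_pos_iff.mp (hV ▸ Nat.one_pos))
    · exact .inl (h₁ ▸ h₂ ▸ subset_rfl)
    · rw [hU, card_univ, hV] at hU2
      omega
  rw [assemblyTreeCount_eq_card, card_eq_one]
  refine ⟨{univ}, eq_singleton_iff_unique_mem.mpr ⟨mem_assemblyFamiliesOn.mpr hsingleton,
    fun F hF => ?_⟩⟩
  have hF := mem_assemblyFamiliesOn.mp hF
  exact eq_singleton_iff_unique_mem.mpr ⟨hF.mem, fun U hU => huniv U (hF.nonempty U hU)⟩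

end AssemblyFamilies

theorem SimpleGraph.Preconnected.exists_adj_not_mem {V : Type*} {G : SimpleGraph V}
    (hG : G.Preconnected) {S : Set V} {u w : V} (hu : u ∈ S) (hw : w ∉ S) :
    ∃ x ∈ S, ∃ y ∉ S, G.Adj x y := by
  obtain ⟨d, -, hd, hd'⟩ := (hG u w).some.exists_boundary_dart S hu hw
  exact ⟨_, hd, _, hd', d.adj⟩

section RootSplit

variable {V : Type*} [Fintype V] [DecidableEq V] {G : SimpleGraph V} {S : Finset V}

namespace IsAssemblyFamilyOn

variable {F F₁ F₂ : Finset (Finset V)}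

theorem ne_univ_of_compl_mem (hF : IsAssemblyFamilyOn G univ F) (hSc : Sᶜ ∈ F) : S ≠ univ := by
  rintro rfl
  simpa using hF.nonempty _ hSc

theorem subset_or_subset_compl (hF : IsAssemblyFamilyOn G univ F) (hS : S ∈ F) (hSc : Sᶜ ∈ F)
    {U : Finset V} (hU : U ∈ F) (hUuniv : U ≠ univ) : U ⊆ S ∨ U ⊆ Sᶜ := by
  rw [subset_compl_iff_disjoint_right]
  rcases hF.isLaminar U hU S hS with h | h | h
  · exact .inl h
  · rcases hF.isLaminar U hU Sᶜ hSc with h' | h' | h'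
    · exact .inr (subset_compl_iff_disjoint_right.mp h')
    · exact absurd (univ_subset_iff.mp (union_compl S ▸ union_subset h h')) hUuniv
    · exact .inl (disjoint_compl_right_iff.mp h')
  · exact .inr h

theorem insert_univ_filter_union_filter (hF : IsAssemblyFamilyOn G univ F) (hS : S ∈ F)
    (hSc : Sᶜ ∈ F) : insert univ (F.filter (· ⊆ S) ∪ F.filter (· ⊆ Sᶜ)) = F := by
  refine subset_antisymm (insert_subset hF.mem (union_subset (filter_subset _ _)
    (filter_subset _ _))) fun U hU => ?_
  by_cases hUuniv : U = univ
  · exact hUuniv ▸ mem_insert_self _ _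
  rcases hF.subset_or_subset_compl hS hSc hU hUuniv with h | h <;> simp [hU, h]

/-- The laminar bound on both sides of the cut leaves no room for a smaller family. -/
theorem card_filter_subset (hF : IsAssemblyFamilyOn G univ F) (hS : S ∈ F) (hSc : Sᶜ ∈ F) :
    #(F.filter (· ⊆ S)) = 2 * #S - 1 := by
  have hle := (card_le_card (hF.insert_univ_filter_union_filter hS hSc).ge).trans
    ((card_insert_le _ _).trans (Nat.add_le_add_right (card_union_le _ _) 1))
  have h₁ := (hF.isLaminar.mono (filter_subset (· ⊆ S) F)).card_le
    (fun U hU => hF.nonempty U (mem_filter.mp hU).1) (fun U hU => (mem_filter.mp hU).2)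
  have h₂ := (hF.isLaminar.mono (filter_subset (· ⊆ Sᶜ) F)).card_le
    (fun U hU => hF.nonempty U (mem_filter.mp hU).1) (fun U hU => (mem_filter.mp hU).2)
  have := card_add_card_compl S
  have := (hF.nonempty S hS).card_pos
  have := (hF.nonempty Sᶜ hSc).card_pos
  have := hF.card
  rw [card_univ] at this
  omega

theorem isAssemblyFamilyOn_filter_subset (hF : IsAssemblyFamilyOn G univ F) (hS : S ∈ F)
    (hSc : Sᶜ ∈ F) : IsAssemblyFamilyOn G S (F.filter (· ⊆ S)) := by
  refine ⟨fun v hv => mem_filter.mpr ⟨hF.singleton_mem v (mem_univ v),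
      singleton_subset_iff.mpr hv⟩,
    mem_filter.mpr ⟨hS, subset_rfl⟩, fun U hU => hF.nonempty U (mem_filter.mp hU).1,
    fun U hU => (mem_filter.mp hU).2, hF.isLaminar.mono (filter_subset _ _), ?_,
    hF.card_filter_subset hS hSc⟩
  intro U hU hUcard
  obtain ⟨hUF, hUS⟩ := mem_filter.mp hU
  obtain ⟨U₁, hU₁, U₂, hU₂, hd, rfl, hedge⟩ := hF.exists_split U hUF hUcard
  exact ⟨U₁, mem_filter.mpr ⟨hU₁, subset_union_left.trans hUS⟩,
    U₂, mem_filter.mpr ⟨hU₂, subset_union_right.trans hUS⟩, hd, rfl, hedge⟩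

theorem card_filter_compl_mem (hF : IsAssemblyFamilyOn G univ F) (hV : 1 < Fintype.card V) :
    #(F.filter (fun S => Sᶜ ∈ F)) = 2 := by
  obtain ⟨U, hU, U', hU', hd, hunion, -⟩ := hF.exists_split univ hF.mem (by rwa [card_univ])
  obtain rfl : U' = Uᶜ :=
    IsCompl.eq_compl ⟨hd.symm, codisjoint_iff.mpr (by rwa [sup_eq_union, union_comm])⟩
  have hsplits : F.filter (fun S => Sᶜ ∈ F) = {U, Uᶜ} := by
    ext S
    simp only [mem_filter, mem_insert, mem_singleton]
    constructor
    · rintro ⟨hS, hSc⟩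
      have hU_ne := hF.ne_univ_of_compl_mem hU'
      have hUc_ne := hF.ne_univ_of_compl_mem (S := Uᶜ) (by rwa [compl_compl])
      rcases hF.subset_or_subset_compl hU hU' hS (hF.ne_univ_of_compl_mem hSc) with h | h <;>
        rcases hF.subset_or_subset_compl hU hU' hSc
          (hF.ne_univ_of_compl_mem (S := Sᶜ) (by rwa [compl_compl])) with h' | h'
      · exact absurd (univ_subset_iff.mp (union_compl S ▸ union_subset h h')) hU_ne
      · exact .inl (subset_antisymm h (compl_subset_compl.mp h'))
      · exact .inr (subset_antisymm h (by simpa using compl_subset_compl.mpr h'))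
      · exact absurd (univ_subset_iff.mp (union_compl S ▸ union_subset h h')) hUc_ne
    · rintro (rfl | rfl)
      exacts [⟨hU, hU'⟩, ⟨hU', by rwa [compl_compl]⟩]
  rw [hsplits, card_pair]
  intro h
  obtain ⟨v, hv⟩ := hF.nonempty U hU
  exact mem_compl.mp (h ▸ hv) hv

theorem filter_subset_insert_univ_union (h₁ : IsAssemblyFamilyOn G S F₁)
    (h₂ : IsAssemblyFamilyOn G Sᶜ F₂) : (insert univ (F₁ ∪ F₂)).filter (· ⊆ S) = F₁ := by
  ext U
  simp only [mem_filter, mem_insert, mem_union]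
  constructor
  · rintro ⟨rfl | hU | hU, hUS⟩
    · obtain ⟨v, hv⟩ := h₂.nonempty _ h₂.mem
      exact absurd (hUS (mem_univ v)) (mem_compl.mp hv)
    · exact hU
    · obtain ⟨v, hv⟩ := h₂.nonempty U hU
      exact absurd (hUS hv) (mem_compl.mp (h₂.subset U hU hv))
  · exact fun hU => ⟨.inr (.inl hU), h₁.subset U hU⟩

theorem card_insert_univ_union (h₁ : IsAssemblyFamilyOn G S F₁)
    (h₂ : IsAssemblyFamilyOn G Sᶜ F₂) : #(insert univ (F₁ ∪ F₂)) = 2 * #(univ : Finset V) - 1 := by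
  have huniv : univ ∉ F₁ ∪ F₂ := by
    intro h
    rcases mem_union.mp h with h | h
    · obtain ⟨v, hv⟩ := h₂.nonempty _ h₂.mem
      exact mem_compl.mp hv (h₁.subset _ h (mem_univ v))
    · obtain ⟨v, hv⟩ := h₁.nonempty _ h₁.mem
      exact mem_compl.mp (h₂.subset _ h (mem_univ v)) hv
  have hdisj : Disjoint F₁ F₂ := disjoint_left.mpr fun U hU₁ hU₂ =>
    (h₁.nonempty U hU₁).ne_empty (subset_empty.mp
      (inter_compl S ▸ subset_inter (h₁.subset U hU₁) (h₂.subset U hU₂)))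
  rw [card_insert_of_notMem huniv, card_union_of_disjoint hdisj, h₁.card, h₂.card,
    card_univ, ← card_add_card_compl S]
  have := (h₁.nonempty _ h₁.mem).card_pos
  have := (h₂.nonempty _ h₂.mem).card_pos
  omega

theorem insert_univ_union (h₁ : IsAssemblyFamilyOn G S F₁) (h₂ : IsAssemblyFamilyOn G Sᶜ F₂)
    (hedge : ∃ u ∈ S, ∃ v ∉ S, G.Adj u v) : IsAssemblyFamilyOn G univ (insert univ (F₁ ∪ F₂)) := by
  have hmem₁ {U} (hU : U ∈ F₁) : U ∈ insert univ (F₁ ∪ F₂) :=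
    mem_insert_of_mem (mem_union_left _ hU)
  have hmem₂ {U} (hU : U ∈ F₂) : U ∈ insert univ (F₁ ∪ F₂) :=
    mem_insert_of_mem (mem_union_right _ hU)
  have hdisj : ∀ U₁ ∈ F₁, ∀ U₂ ∈ F₂, Disjoint U₁ U₂ := fun U₁ hU₁ U₂ hU₂ =>
    disjoint_compl_right.mono (h₁.subset U₁ hU₁) (h₂.subset U₂ hU₂)
  refine ⟨fun v _ => ?_, mem_insert_self _ _, fun U hU => ?_, fun U _ => subset_univ U,
    (h₁.isLaminar.union h₂.isLaminar hdisj).insert_univ, fun U hU hUcard => ?_,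
    card_insert_univ_union h₁ h₂⟩
  · by_cases hv : v ∈ S
    exacts [hmem₁ (h₁.singleton_mem v hv), hmem₂ (h₂.singleton_mem v (mem_compl.mpr hv))]
  · rcases mem_insert.mp hU with rfl | hU
    · exact univ_nonempty_iff.mpr ⟨(h₁.nonempty _ h₁.mem).choose⟩
    rcases mem_union.mp hU with hU | hU
    exacts [h₁.nonempty U hU, h₂.nonempty U hU]
  · rcases mem_insert.mp hU with rfl | hU
    · obtain ⟨u, hu, v, hv, huv⟩ := hedge
      exact ⟨S, hmem₁ h₁.mem, Sᶜ, hmem₂ h₂.mem, disjoint_compl_right, union_compl S,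
        u, hu, v, mem_compl.mpr hv, huv⟩
    rcases mem_union.mp hU with hU | hU
    · obtain ⟨U₁, hU₁, U₂, hU₂, hsplit⟩ := h₁.exists_split U hU hUcard
      exact ⟨U₁, hmem₁ hU₁, U₂, hmem₁ hU₂, hsplit⟩
    · obtain ⟨U₁, hU₁, U₂, hU₂, hsplit⟩ := h₂.exists_split U hU hUcard
      exact ⟨U₁, hmem₂ hU₁, U₂, hmem₂ hU₂, hsplit⟩

end IsAssemblyFamilyOn

theorem sum_card_assemblyFamiliesOn_mul_compl (hG : G.Preconnected) :
    ∑ S : Finset V, #(assemblyFamiliesOn G S) * #(assemblyFamiliesOn G Sᶜ) =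
      ∑ F ∈ assemblyFamiliesOn G univ, #(F.filter fun S => Sᶜ ∈ F) := by
  simp only [← card_product, ← card_sigma]
  have mem_pairs {p : Σ _ : Finset V, Finset (Finset V) × Finset (Finset V)} :
      p ∈ univ.sigma (fun S => assemblyFamiliesOn G S ×ˢ assemblyFamiliesOn G Sᶜ) ↔
        IsAssemblyFamilyOn G p.1 p.2.1 ∧ IsAssemblyFamilyOn G p.1ᶜ p.2.2 := by
    simp
  have mem_splits {q : Σ _ : Finset (Finset V), Finset V} :
      q ∈ (assemblyFamiliesOn G univ).sigma (fun F => F.filter fun S => Sᶜ ∈ F) ↔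
        IsAssemblyFamilyOn G univ q.1 ∧ q.2 ∈ q.1 ∧ q.2ᶜ ∈ q.1 := by
    simp
  refine card_nbij' (fun p => ⟨insert univ (p.2.1 ∪ p.2.2), p.1⟩)
    (fun q => ⟨q.2, q.1.filter (· ⊆ q.2), q.1.filter (· ⊆ q.2ᶜ)⟩) ?_ ?_ ?_ ?_
  · rintro ⟨S, F₁, F₂⟩ h
    obtain ⟨h₁, h₂⟩ := mem_pairs.mp h
    obtain ⟨u, hu⟩ := h₁.nonempty S h₁.mem
    obtain ⟨w, hw⟩ := h₂.nonempty _ h₂.mem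
    refine mem_splits.mpr ⟨h₁.insert_univ_union h₂ ?_, by simp [h₁.mem], by simp [h₂.mem]⟩
    exact hG.exists_adj_not_mem (S := (S : Set V)) hu (mem_compl.mp hw)
  · rintro ⟨F, S⟩ h
    obtain ⟨hF, hS, hSc⟩ := mem_splits.mp h
    exact mem_pairs.mpr ⟨hF.isAssemblyFamilyOn_filter_subset hS hSc,
      hF.isAssemblyFamilyOn_filter_subset hSc (by rwa [compl_compl])⟩
  · rintro ⟨S, F₁, F₂⟩ h
    obtain ⟨h₁, h₂⟩ := mem_pairs.mp h
    have h₁' : IsAssemblyFamilyOn G Sᶜᶜ F₁ := by rwa [compl_compl]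
    simp only [Sigma.mk.injEq, heq_eq_eq, Prod.mk.injEq, true_and]
    exact ⟨h₁.filter_subset_insert_univ_union h₂,
      union_comm F₁ F₂ ▸ h₂.filter_subset_insert_univ_union h₁'⟩
  · rintro ⟨F, S⟩ h
    obtain ⟨hF, hS, hSc⟩ := mem_splits.mp h
    simp only [Sigma.mk.injEq, heq_eq_eq, and_true]
    exact hF.insert_univ_filter_union_filter hS hSc

theorem two_mul_assemblyTreeCount (hG : G.Preconnected) (hV : 1 < Fintype.card V) :
    2 * assemblyTreeCount G =
      ∑ S : Finset V, #(assemblyFamiliesOn G S) * #(assemblyFamiliesOn G Sᶜ) := by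
  rw [sum_card_assemblyFamiliesOn_mul_compl hG, sum_congr rfl fun F hF =>
    (mem_assemblyFamiliesOn.mp hF).card_filter_compl_mem hV, sum_const, smul_eq_mul, mul_comm,
    assemblyTreeCount_eq_card]

end RootSplit

section Multipartite

variable {N : ℕ}

theorem completeMultipartiteGraph'_adj {d : Fin N → ℕ} {u v : Σ i, Fin (d i)} :
    (completeMultipartiteGraph' d).Adj u v ↔ u.1 ≠ v.1 := by
  rw [completeMultipartiteGraph', SimpleGraph.fromRel_adj]
  exact ⟨fun ⟨_, h⟩ => h.elim id Ne.symm, fun h => ⟨fun huv => h (congrArg _ huv), .inl h⟩⟩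

theorem completeMultipartiteGraph'_preconnected {d : Fin N → ℕ} {i j : Fin N} (hij : i ≠ j)
    (hi : d i ≠ 0) (hj : d j ≠ 0) : (completeMultipartiteGraph' d).Preconnected := by
  have hother (k : Fin N) : ∃ w : Σ i, Fin (d i), w.1 ≠ k := by
    by_cases hk : i = k
    · exact ⟨⟨j, ⟨0, Nat.pos_of_ne_zero hj⟩⟩, hk ▸ hij.symm⟩
    · exact ⟨⟨i, ⟨0, Nat.pos_of_ne_zero hi⟩⟩, hk⟩
  intro u v
  by_cases huv : u.1 = v.1
  · obtain ⟨w, hw⟩ := hother u.1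
    exact (completeMultipartiteGraph'_adj.mpr (Ne.symm hw)).reachable.trans
      (completeMultipartiteGraph'_adj.mpr (huv ▸ hw)).reachable
  · exact (completeMultipartiteGraph'_adj.mpr huv).reachable

theorem assemblyTreeCount_completeMultipartiteGraph'_zero :
    assemblyTreeCount (completeMultipartiteGraph' ⇑(0 : Fin N →₀ ℕ)) = 0 :=
  have : IsEmpty (Σ i : Fin N, Fin ((0 : Fin N →₀ ℕ) i)) := ⟨fun v => (v.2 : Fin 0).elim0⟩
  assemblyTreeCount_of_isEmpty _

theorem assemblyTreeCount_completeMultipartiteGraph'_single (i : Fin N) (k : ℕ) :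
    assemblyTreeCount (completeMultipartiteGraph' (Finsupp.single i k)) =
      if k = 1 then 1 else 0 := by
  have hcard : Fintype.card (Σ j, Fin (Finsupp.single i k j)) = k := by
    simp [Fintype.card_sigma, Finsupp.single_apply]
  have hpart (v : Σ j, Fin (Finsupp.single i k j)) : v.1 = i := by
    by_contra h
    have : Finsupp.single i k v.1 = 0 := Finsupp.single_eq_of_ne' (Ne.symm h)
    have := v.2.isLt
    omega
  rcases k with _ | _ | k
  · have : IsEmpty (Σ j, Fin (Finsupp.single i 0 j)) := Fintype.card_eq_zero_iff.mp hcard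
    exact assemblyTreeCount_of_isEmpty _
  · exact assemblyTreeCount_of_card_eq_one _ hcard
  · have hbot : completeMultipartiteGraph' (Finsupp.single i (k + 2)) = ⊥ := by
      ext u v
      simp [completeMultipartiteGraph'_adj, hpart u, hpart v]
    rw [hbot, assemblyTreeCount_bot (by omega)]
    rfl

variable {d : Fin N →₀ ℕ}

def partSlice (S : Finset (Σ i, Fin (d i))) (i : Fin N) : Finset (Fin (d i)) :=
  univ.filter fun k => ⟨i, k⟩ ∈ S

@[simp]
theorem mem_partSlice {S : Finset (Σ i, Fin (d i))} {i : Fin N} {k : Fin (d i)} :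
    k ∈ partSlice S i ↔ ⟨i, k⟩ ∈ S := by
  simp [partSlice]

theorem sigma_partSlice (S : Finset (Σ i, Fin (d i))) : univ.sigma (partSlice S) = S := by
  ext ⟨i, k⟩
  simp

theorem partSlice_sigma (f : ∀ i, Finset (Fin (d i))) : partSlice (univ.sigma f) = f := by
  ext i k
  simp

theorem partSlice_compl (S : Finset (Σ i, Fin (d i))) (i : Fin N) :
    partSlice Sᶜ i = (partSlice S i)ᶜ := by
  ext k
  simp

noncomputable def partSizes (S : Finset (Σ i, Fin (d i))) : Fin N →₀ ℕ :=
  Finsupp.equivFunOnFinite.symm fun i => #(partSlice S i)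

@[simp]
theorem partSizes_apply (S : Finset (Σ i, Fin (d i))) (i : Fin N) :
    partSizes S i = #(partSlice S i) :=
  rfl

theorem partSizes_add_partSizes_compl (S : Finset (Σ i, Fin (d i))) :
    partSizes S + partSizes Sᶜ = d := by
  ext i
  simp [partSlice_compl, card_add_card_compl]

theorem card_filter_partSizes_eq (e : Fin N →₀ ℕ) :
    #(univ.filter fun S : Finset (Σ i, Fin (d i)) => partSizes S = e) =
      ∏ i, (d i).choose (e i) := by
  have hchoose : ∏ i, (d i).choose (e i) =
      #(Fintype.piFinset fun i => powersetCard (e i) (univ : Finset (Fin (d i)))) := by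
    simp [Fintype.card_piFinset]
  rw [hchoose]
  refine card_nbij' partSlice (univ.sigma ·) ?_ ?_ (fun S _ => sigma_partSlice S)
    (fun f _ => partSlice_sigma f)
  · intro S hS
    simp_all [Finsupp.ext_iff]
  · intro f hf
    simp_all [Finsupp.ext_iff, partSlice_sigma]

theorem exists_embedding_map_univ_eq (S : Finset (Σ i, Fin (d i))) :
    ∃ ψ : completeMultipartiteGraph' (partSizes S) ↪g completeMultipartiteGraph' d,
      univ.map ψ.toEmbedding = S := by
  let ψ : (Σ i, Fin (partSizes S i)) ↪ Σ i, Fin (d i) := .sigmaMap (.refl _) fun i =>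
    ((partSlice S i).orderEmbOfFin (partSizes_apply S i).symm).toEmbedding
  refine ⟨⟨ψ, fun {a b} => ?_⟩, ?_⟩
  · rw [completeMultipartiteGraph'_adj, completeMultipartiteGraph'_adj]
    rfl
  ext ⟨i, k⟩
  rw [mem_map]
  constructor
  · rintro ⟨⟨i, b⟩, -, h⟩
    cases h
    exact mem_partSlice.mp (orderEmbOfFin_mem _ _ b)
  · intro h
    obtain ⟨b, hb⟩ :
        k ∈ Set.range ((partSlice S i).orderEmbOfFin (partSizes_apply S i).symm) := by
      rw [range_orderEmbOfFin]
      exact mem_partSlice.mpr h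
    exact ⟨⟨i, b⟩, mem_univ _, by rw [← hb]; rfl⟩

theorem card_assemblyFamiliesOn_completeMultipartiteGraph' (S : Finset (Σ i, Fin (d i))) :
    #(assemblyFamiliesOn (completeMultipartiteGraph' d) S) =
      assemblyTreeCount (completeMultipartiteGraph' (partSizes S)) := by
  obtain ⟨ψ, hψ⟩ := exists_embedding_map_univ_eq S
  have := congrArg card (assemblyFamiliesOn_map ψ univ)
  rwa [hψ, card_map, ← assemblyTreeCount_eq_card] at this

theorem two_mul_assemblyTreeCount_completeMultipartiteGraph' {i j : Fin N} (hij : i ≠ j)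
    (hi : d i ≠ 0) (hj : d j ≠ 0) :
    2 * assemblyTreeCount (completeMultipartiteGraph' d) =
      ∑ p ∈ antidiagonal d, (∏ i, (d i).choose (p.1 i)) *
        (assemblyTreeCount (completeMultipartiteGraph' p.1) *
          assemblyTreeCount (completeMultipartiteGraph' p.2)) := by
  have hV : 1 < Fintype.card (Σ i, Fin (d i)) := by
    simp only [Fintype.card_sigma, Fintype.card_fin]
    have := add_le_sum (fun k _ => Nat.zero_le (d k)) (mem_univ i) (mem_univ j) hij
    omega
  rw [two_mul_assemblyTreeCount (completeMultipartiteGraph'_preconnected hij hi hj) hV]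
  simp only [card_assemblyFamiliesOn_completeMultipartiteGraph']
  rw [← sum_fiberwise_of_maps_to (g := fun S => (partSizes S, partSizes Sᶜ)) (t := antidiagonal d)
    fun S _ => mem_antidiagonal.mpr (partSizes_add_partSizes_compl S)]
  refine sum_congr rfl fun p hp => ?_
  have hcompl {S : Finset (Σ i, Fin (d i))} (h : partSizes S = p.1) : partSizes Sᶜ = p.2 := by
    have := (partSizes_add_partSizes_compl S).trans (mem_antidiagonal.mp hp).symm
    rw [h] at this
    exact add_left_cancel this
  have hfiber : univ.filter (fun S => (partSizes S, partSizes Sᶜ) = p) =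
      univ.filter (fun S : Finset (Σ i, Fin (d i)) => partSizes S = p.1) :=
    filter_congr fun S _ => ⟨fun h => congrArg Prod.fst h, fun h => Prod.ext h (hcompl h)⟩
  rw [hfiber, sum_const_nat fun S hS => by rw [(mem_filter.mp hS).2, hcompl (mem_filter.mp hS).2],
    card_filter_partSizes_eq]

end Multipartite

section EGF

open MvPowerSeries

variable {σ : Type*} [Fintype σ]

noncomputable def egf (f : (σ →₀ ℕ) → ℚ) : MvPowerSeries σ ℚ :=
  fun d => f d / ∏ i, ((d i).factorial : ℚ)

theorem coeff_egf (f : (σ →₀ ℕ) → ℚ) (d : σ →₀ ℕ) :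
    coeff d (egf f) = f d / ∏ i, ((d i).factorial : ℚ) :=
  rfl

theorem coeff_egf_mul [DecidableEq σ] (f g : (σ →₀ ℕ) → ℚ) (d : σ →₀ ℕ) :
    coeff d (egf f * egf g) =
      (∑ p ∈ antidiagonal d, (∏ i, ((d i).choose (p.1 i) : ℚ)) * (f p.1 * g p.2)) /
        ∏ i, ((d i).factorial : ℚ) := by
  rw [coeff_mul, sum_div]
  refine sum_congr rfl fun p hp => ?_
  have hd (i : σ) : d i = p.1 i + p.2 i := by rw [← mem_antidiagonal.mp hp, Finsupp.add_apply]
  have hfact : ∏ i, ((d i).factorial : ℚ) = (∏ i, ((d i).choose (p.1 i) : ℚ)) *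
      ((∏ i, ((p.1 i).factorial : ℚ)) * ∏ i, ((p.2 i).factorial : ℚ)) := by
    rw [← prod_mul_distrib, ← prod_mul_distrib]
    refine prod_congr rfl fun i _ => ?_
    rw [hd, Nat.choose_symm_add, ← Nat.add_choose_mul_factorial_mul_factorial]
    push_cast
    ring
  have hchoose : (∏ i, ((d i).choose (p.1 i) : ℚ)) ≠ 0 := prod_ne_zero_iff.mpr fun i _ =>
    Nat.cast_ne_zero.mpr (Nat.choose_pos (hd i ▸ Nat.le_add_right _ _)).ne'
  rw [coeff_egf, coeff_egf, hfact, div_mul_div_comm, mul_div_mul_left _ _ hchoose]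

end EGF

section MultipartiteEGF

open MvPowerSeries

variable {N : ℕ}

noncomputable def multipartiteEGF (N : ℕ) : MvPowerSeries (Fin N) ℚ :=
  egf fun d => (assemblyTreeCount (completeMultipartiteGraph' d) : ℚ)

theorem constantCoeff_multipartiteEGF : constantCoeff (multipartiteEGF N) = 0 := by
  rw [← coeff_zero_eq_constantCoeff_apply, multipartiteEGF, coeff_egf,
    assemblyTreeCount_completeMultipartiteGraph'_zero, Nat.cast_zero, zero_div]

theorem coeff_single_multipartiteEGF (i : Fin N) (k : ℕ) :
    coeff (Finsupp.single i k) (multipartiteEGF N) = if k = 1 then 1 else 0 := by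
  rw [multipartiteEGF, coeff_egf, assemblyTreeCount_completeMultipartiteGraph'_single]
  split_ifs with hk
  · simp [hk, Finsupp.single_apply, apply_ite]
  · simp

theorem coeff_single_multipartiteEGF_mul_self (i : Fin N) (k : ℕ) :
    coeff (Finsupp.single i k) (multipartiteEGF N * multipartiteEGF N) =
      if k = 2 then 1 else 0 := by
  classical
  rw [coeff_mul, Finsupp.antidiagonal_single, sum_map]
  have hterm (x : ℕ × ℕ) :
      (if x.2 = 1 then if x.1 = 1 then (1 : ℚ) else 0 else 0) = if x = (1, 1) then 1 else 0 := by
    obtain ⟨a, b⟩ := x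
    by_cases ha : a = 1 <;> by_cases hb : b = 1 <;> simp [ha, hb]
  simp [coeff_single_multipartiteEGF, hterm, eq_comm]

theorem coeff_multipartiteEGF_mul_self {d : Fin N →₀ ℕ} {i j : Fin N} (hij : i ≠ j)
    (hi : d i ≠ 0) (hj : d j ≠ 0) :
    coeff d (multipartiteEGF N * multipartiteEGF N) = 2 * coeff d (multipartiteEGF N) := by
  rw [multipartiteEGF, coeff_egf_mul, coeff_egf, mul_div_assoc']
  congr 1
  exact_mod_cast (two_mul_assemblyTreeCount_completeMultipartiteGraph' hij hi hj).symm

theorem multipartiteEGF_mul_self :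
    multipartiteEGF N * multipartiteEGF N = 2 * multipartiteEGF N + ∑ i, (X i ^ 2 - 2 * X i) := by
  classical
  ext d
  have h2 (φ : MvPowerSeries (Fin N) ℚ) : coeff d (2 * φ) = 2 * coeff d φ := by
    rw [← map_ofNat C 2, coeff_C_mul]
  simp only [map_add, map_sum, map_sub, h2, coeff_X_pow, coeff_X]
  rcases lt_or_ge 1 #d.support with h | h
  · obtain ⟨i, hi, j, hj, hij⟩ := one_lt_card.mp h
    rw [Finsupp.mem_support_iff] at hi hj
    have hne (l : Fin N) (k : ℕ) : d ≠ Finsupp.single l k := by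
      rintro rfl
      simp only [Finsupp.single_apply, ne_eq, ite_eq_right_iff, not_forall] at hi hj
      exact hij (hi.1.symm.trans hj.1)
    simp [hne, coeff_multipartiteEGF_mul_self hij hi hj]
  obtain h | h := Nat.le_one_iff_eq_zero_or_eq_one.mp h
  · obtain rfl := Finsupp.card_support_eq_zero.mp h
    simp [coeff_zero_eq_constantCoeff_apply, constantCoeff_multipartiteEGF,
      eq_comm (a := (0 : Fin N →₀ ℕ))]
  · obtain ⟨i, hi, hd⟩ := Finsupp.card_support_eq_one.mp h
    rw [hd]
    obtain hk | hk | hk : d i = 1 ∨ d i = 2 ∨ (d i ≠ 1 ∧ d i ≠ 2) := by omega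
    all_goals simp [coeff_single_multipartiteEGF, coeff_single_multipartiteEGF_mul_self,
      Finsupp.single_eq_single_iff, hi, hk]

end MultipartiteEGF

open MvPowerSeries in
/-- The EGF for the numbers of assembly trees of complete multipartite graphs
is `A(x) = 1 - √(1 - N + ∑ᵢ (1 - xᵢ)²)`; in particular for `N = 2` (complete
bipartite graphs) it is `1 - √((1-x)² + (1-y)² - 1)`. -/
theorem multipartite_egf {N : ℕ} (A : MvPowerSeries (Fin N) ℚ)
    (hA : ∀ d : Fin N →₀ ℕ,
      coeff (R := ℚ) d A = (assemblyTreeCount (completeMultipartiteGraph' (fun i => d i)) : ℚ) /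
        ∏ i, (d i).factorial) :
    constantCoeff (σ := Fin N) (R := ℚ) A = 0 ∧
    (1 - A) ^ 2 = C (σ := Fin N) (R := ℚ) (1 - N) + ∑ i, (1 - X i) ^ 2 := by
  obtain rfl : A = multipartiteEGF N := ext fun d => by simp [hA, multipartiteEGF, coeff_egf]
  refine ⟨constantCoeff_multipartiteEGF, ?_⟩
  have hsq : ∑ i, (1 - X i) ^ 2 = (N : MvPowerSeries (Fin N) ℚ) + ∑ i, (X i ^ 2 - 2 * X i) := by
    simp [sub_sq, sum_add_distrib]
    ring
  rw [hsq, map_sub, map_one, map_natCast]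
  linear_combination (multipartiteEGF_mul_self (N := N))
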